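/- arXiv:2410.00996 — 4 statements merged into one kernel-verified Lean document; each statement's English description precedes it below -/
import Mathlib

section
/- Let n ≥ 1 and let O_1, …, O_n ⊂ ℝ^d be axis-aligned boxes, each with positive side length in every dimension, and let V := Vol(O_1 ∪ ⋯ ∪ O_n). Suppose O and O' are two of these boxes, of types (L_1,…,L_d) and (L'_1,…,L'_d) respectively, and suppose there exists a dimension k ∈ {1,…,d} with 2^{|L_k − L'_k|} ≥ n^4. Then Vol(O ∩ O') ≤ 2V / n^4. -/
open MeasureTheory
open scoped ENNReal

lemma aux_dissim (d n : ℕ) (hn : 1 ≤ n)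
    (a b : Fin n → Fin d → ℝ)
    (V : ℝ≥0∞)
    (hV : V = volume (⋃ i : Fin n, Set.univ.pi fun k => Set.Icc (a i k) (b i k)))
    (p q : Fin n) (L L' : Fin d → ℤ)
    (hL : ∀ k, b p k - a p k ∈ Set.Ico ((2 : ℝ) ^ (L k)) ((2 : ℝ) ^ (L k + 1)))
    (hL' : ∀ k, b q k - a q k ∈ Set.Ico ((2 : ℝ) ^ (L' k)) ((2 : ℝ) ^ (L' k + 1)))
    (k : Fin d) (hk : (n : ℝ) ^ 4 ≤ (2 : ℝ) ^ (L' k - L k)) :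
    volume ((Set.univ.pi fun k => Set.Icc (a p k) (b p k)) ∩
        (Set.univ.pi fun k => Set.Icc (a q k) (b q k)))
      ≤ 2 * V / (n : ℝ≥0∞) ^ 4 := by
  have hn0 : ((n : ℝ≥0∞)) ^ 4 ≠ 0 := by
    have : (n : ℝ≥0∞) ≠ 0 := by exact_mod_cast (show n ≠ 0 by omega)
    positivity
  rw [ENNReal.le_div_iff_mul_le (Or.inl hn0) (Or.inl (by simp))]
  set m : Fin d → ℝ := fun j => min (b p j) (b q j) - max (a p j) (a q j) with hm
  set s : Fin d → ℝ := fun j => b q j - a q j with hs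
  have hvol : volume ((Set.univ.pi fun j => Set.Icc (a p j) (b p j)) ∩
      (Set.univ.pi fun j => Set.Icc (a q j) (b q j)))
      = ∏ j, ENNReal.ofReal (m j) := by
    rw [← Set.pi_inter_distrib]
    simp [Set.Icc_inter_Icc, MeasureTheory.volume_pi_pi, Real.volume_Icc, Real.volume_Icc_pi, hm]
  have hOq : (∏ j, ENNReal.ofReal (s j)) ≤ V := by
    rw [hV]
    refine le_trans (le_of_eq ?_) (measure_mono (Set.subset_iUnion _ q))
    rw [MeasureTheory.volume_pi_pi]
    simp [Real.volume_Icc, hs]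
  have h1 : ∀ j, m j ≤ s j := fun j => by
    simp only [hm, hs]
    have := le_max_right (a p j) (a q j)
    have := min_le_right (b p j) (b q j)
    linarith
  have hsk : (2:ℝ) ^ (L' k) ≤ s k := (hL' k).1
  have h2 : m k * (n : ℝ) ^ 4 ≤ 2 * s k := by
    have hmk : m k ≤ b p k - a p k := by
      simp only [hm]
      have := le_max_left (a p k) (a q k)
      have := min_le_left (b p k) (b q k)
      linarith
    have hb : b p k - a p k < 2 * (2:ℝ) ^ (L k) := by
      have := (hL k).2
      rwa [zpow_add_one₀ (by norm_num : (2:ℝ) ≠ 0), mul_comm] at this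
    have hkey : (2:ℝ) ^ (L k) * (n:ℝ) ^ 4 ≤ (2:ℝ) ^ (L' k) := by
      calc (2:ℝ) ^ (L k) * (n:ℝ) ^ 4 ≤ (2:ℝ) ^ (L k) * (2:ℝ) ^ (L' k - L k) := by
            exact mul_le_mul_of_nonneg_left hk (by positivity)
        _ = (2:ℝ) ^ (L' k) := by
            rw [← zpow_add₀ (by norm_num : (2:ℝ) ≠ 0)]; ring_nf
    nlinarith [pow_nonneg (Nat.cast_nonneg n : (0:ℝ) ≤ n) 4]
  have h2' : ENNReal.ofReal (m k) * (n : ℝ≥0∞) ^ 4 ≤ 2 * ENNReal.ofReal (s k) := by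
    have hcast : ((n : ℝ≥0∞)) ^ 4 = ENNReal.ofReal ((n:ℝ) ^ 4) := by
      rw [ENNReal.ofReal_pow (Nat.cast_nonneg n), ENNReal.ofReal_natCast]
    rw [hcast, ← ENNReal.ofReal_mul' (by positivity)]
    calc ENNReal.ofReal (m k * (n:ℝ)^4) ≤ ENNReal.ofReal (2 * s k) :=
          ENNReal.ofReal_le_ofReal h2
      _ = 2 * ENNReal.ofReal (s k) := by
          rw [ENNReal.ofReal_mul (by norm_num)]; norm_num
  rw [hvol]
  calc (∏ j, ENNReal.ofReal (m j)) * (n : ℝ≥0∞) ^ 4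
      = (ENNReal.ofReal (m k) * (n : ℝ≥0∞) ^ 4) *
          ∏ j ∈ Finset.univ.erase k, ENNReal.ofReal (m j) := by
        rw [← Finset.mul_prod_erase Finset.univ _ (Finset.mem_univ k)]; ring
    _ ≤ (2 * ENNReal.ofReal (s k)) * ∏ j ∈ Finset.univ.erase k, ENNReal.ofReal (s j) := by
        refine mul_le_mul' h2' (Finset.prod_le_prod' fun j _ => ENNReal.ofReal_le_ofReal (h1 j))
    _ = 2 * ∏ j, ENNReal.ofReal (s j) := by
        rw [mul_assoc, Finset.mul_prod_erase Finset.univ (fun j => ENNReal.ofReal (s j)) (Finset.mem_univ k)]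
    _ ≤ 2 * V := mul_le_mul_right hOq 2

/-- Boxes in dissimilar classes have small intersection: if boxes `O_p` and `O_q`
(among `n ≥ 1` boxes with positive side lengths) have types `L` and `L'` with
`2 ^ |L k - L' k| ≥ n ^ 4` in some dimension `k`, then
`Vol(O_p ∩ O_q) ≤ 2V / n ^ 4` where `V` is the volume of the union of all boxes. -/
theorem dissimilar_boxes_small_intersection (d n : ℕ) (hn : 1 ≤ n)
    (a b : Fin n → Fin d → ℝ) (hab : ∀ i k, a i k < b i k)
    (V : ℝ≥0∞)
    (hV : V = volume (⋃ i : Fin n, Set.univ.pi fun k => Set.Icc (a i k) (b i k)))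
    (p q : Fin n) (L L' : Fin d → ℤ)
    (hL : ∀ k, b p k - a p k ∈ Set.Ico ((2 : ℝ) ^ (L k)) ((2 : ℝ) ^ (L k + 1)))
    (hL' : ∀ k, b q k - a q k ∈ Set.Ico ((2 : ℝ) ^ (L' k)) ((2 : ℝ) ^ (L' k + 1)))
    (k : Fin d) (hk : (n : ℝ) ^ 4 ≤ (2 : ℝ) ^ (|L k - L' k|)) :
    volume ((Set.univ.pi fun k => Set.Icc (a p k) (b p k)) ∩
        (Set.univ.pi fun k => Set.Icc (a q k) (b q k)))
      ≤ 2 * V / (n : ℝ≥0∞) ^ 4 := by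
  rcases abs_cases (L k - L' k) with ⟨h, _⟩ | ⟨h, _⟩
  · rw [Set.inter_comm]
    exact aux_dissim d n hn a b V hV q p L' L hL' hL k (by rw [h] at hk; exact hk)
  · refine aux_dissim d n hn a b V hV p q L L' hL hL' k ?_
    rw [h, neg_sub] at hk
    exact hk
end

section
/- Let n ≥ 2 and let O_1, …, O_n ⊂ ℝ^d be axis-aligned boxes, each with positive side length in every dimension. Partition the boxes into classes, where two boxes lie in the same class if and only if they have the same type; for each occurring type t let U_t denote the union of the boxes of type t, and let V := Vol(O_1 ∪ ⋯ ∪ O_n). Then the sum of Vol(U_t) over all occurring types t is at most 2·(8·⌈log₂ n⌉)^d · V. -/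
open MeasureTheory
open scoped ENNReal

lemma geo_sum_le (θ : ℤ) (s : Finset ℤ) (hs : ∀ v ∈ s, v ≤ θ) :
    ∑ v ∈ s, (2:ℝ) ^ v ≤ 2 ^ (θ + 1) := by
  classical
  set e : ℤ → ℕ := fun v => (θ - v).toNat with he
  have h1 : ∀ v ∈ s, (2:ℝ) ^ v = 2 ^ θ * (1/2) ^ (e v) := by
    intro v hv
    have hv' : ((e v : ℤ)) = θ - v := Int.toNat_of_nonneg (by have := hs v hv; omega)
    have : (2:ℝ) ^ θ * (1/2) ^ (e v) = 2 ^ θ * (2:ℝ) ^ (-(e v : ℤ)) := by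
      congr 1
      rw [one_div, inv_pow, ← zpow_natCast, ← zpow_neg]
    rw [this, ← zpow_add₀ (by norm_num : (2:ℝ) ≠ 0), hv']
    ring_nf
  rw [Finset.sum_congr rfl h1, ← Finset.mul_sum]
  have h2 : ∑ v ∈ s, ((1:ℝ)/2) ^ (e v) = ∑ j ∈ s.image e, (1/2:ℝ) ^ j := by
    rw [Finset.sum_image]
    intro x hx y hy hxy
    have hx' := hs x hx; have hy' := hs y hy
    simp only [he] at hxy
    omega
  have h3 : ∑ j ∈ s.image e, ((1:ℝ)/2) ^ j ≤ 2 := by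
    have hsub : s.image e ⊆ Finset.range ((s.image e).sup id + 1) := by
      intro j hj
      simp only [Finset.mem_range]
      have : j ≤ (s.image e).sup id := Finset.le_sup (f := id) hj
      omega
    calc ∑ j ∈ s.image e, ((1:ℝ)/2) ^ j
        ≤ ∑ j ∈ Finset.range ((s.image e).sup id + 1), ((1:ℝ)/2) ^ j :=
          Finset.sum_le_sum_of_subset_of_nonneg hsub (by intros; positivity)
      _ ≤ 2 := sum_geometric_two_le _
  calc (2:ℝ) ^ θ * ∑ v ∈ s, (1/2) ^ (e v) ≤ 2 ^ θ * 2 := by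
        rw [h2]; exact mul_le_mul_of_nonneg_left h3 (by positivity)
    _ = 2 ^ (θ + 1) := by rw [zpow_add₀ (by norm_num : (2:ℝ) ≠ 0)]; ring

lemma oneD {n : ℕ} (m : ℕ) (hm : 1 ≤ m) (hn : n ≤ 2 ^ m)
    (p q : Fin n → ℝ) (c : Fin n → ℤ)
    (hc : ∀ i, (2:ℝ) ^ (c i) ≤ q i - p i ∧ q i - p i < 2 ^ (c i + 1))
    (P : Fin n → Prop) (C : Finset ℤ) :
    ∑ v ∈ C, volume (⋃ i ∈ {i : Fin n | P i ∧ c i = v}, Set.Icc (p i) (q i))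
      ≤ ((8 * m : ℕ) : ℝ≥0∞) * volume (⋃ i ∈ {i : Fin n | P i}, Set.Icc (p i) (q i)) := by
  classical
  set W := volume (⋃ i ∈ {i : Fin n | P i}, Set.Icc (p i) (q i)) with hW
  set f : ℤ → ℝ≥0∞ :=
    fun v => volume (⋃ i ∈ {i : Fin n | P i ∧ c i = v}, Set.Icc (p i) (q i)) with hf
  set occ : Finset ℤ := C.filter (fun v => ∃ i, P i ∧ c i = v) with hocc
  have hsum : ∑ v ∈ C, f v = ∑ v ∈ occ, f v := by
    refine (Finset.sum_subset (Finset.filter_subset _ _) ?_).symm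
    intro v hv hnv
    have hempty : {i : Fin n | P i ∧ c i = v} = ∅ := by
      ext i; simp only [Set.mem_setOf_eq, Set.mem_empty_iff_false, iff_false]
      intro h; exact hnv (Finset.mem_filter.mpr ⟨hv, ⟨i, h⟩⟩)
    simp only [hf, hempty, Set.biUnion_empty, measure_empty]
  rw [hsum]
  rcases occ.eq_empty_or_nonempty with h | hne
  · simp [h]
  have hfW : ∀ v, f v ≤ W :=
    fun v => measure_mono (Set.biUnion_subset_biUnion_left (fun i hi => hi.1))
  have hfub : ∀ v, f v ≤ ENNReal.ofReal ((n : ℝ) * 2 ^ (v + 1)) := by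
    intro v
    have hset : {i : Fin n | P i ∧ c i = v}
        = ↑(Finset.univ.filter (fun i => P i ∧ c i = v)) := by ext i; simp
    calc f v = volume (⋃ i ∈ (Finset.univ.filter (fun i => P i ∧ c i = v) : Finset (Fin n)),
            Set.Icc (p i) (q i)) := by
              show volume (⋃ i ∈ {i : Fin n | P i ∧ c i = v}, Set.Icc (p i) (q i)) = _
              rw [hset, Finset.set_biUnion_coe]
      _ ≤ ∑ i ∈ Finset.univ.filter (fun i => P i ∧ c i = v), volume (Set.Icc (p i) (q i)) :=
            measure_biUnion_finset_le _ _
      _ ≤ ∑ _i ∈ Finset.univ.filter (fun i => P i ∧ c i = v), ENNReal.ofReal ((2:ℝ) ^ (v + 1)) := by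
            refine Finset.sum_le_sum ?_
            intro i hi
            rw [Real.volume_Icc]
            apply ENNReal.ofReal_le_ofReal
            have h2 := (hc i).2
            rw [(Finset.mem_filter.mp hi).2.2] at h2
            linarith
      _ = ((Finset.univ.filter (fun i => P i ∧ c i = v)).card : ℝ≥0∞)
            * ENNReal.ofReal ((2:ℝ) ^ (v + 1)) := by rw [Finset.sum_const, nsmul_eq_mul]
      _ ≤ (n : ℝ≥0∞) * ENNReal.ofReal ((2:ℝ) ^ (v + 1)) := by
            refine mul_le_mul' (Nat.cast_le.mpr ?_) le_rfl
            calc (Finset.univ.filter (fun i => P i ∧ c i = v)).card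
                ≤ Finset.univ.card := Finset.card_filter_le _ _
              _ = n := by rw [Finset.card_univ, Fintype.card_fin]
      _ = ENNReal.ofReal ((n : ℝ) * 2 ^ (v + 1)) := by
            rw [ENNReal.ofReal_mul (by positivity), ENNReal.ofReal_natCast]
  set vmax := occ.max' hne with hvmax
  have hmem := Finset.mem_filter.mp (occ.max'_mem hne)
  obtain ⟨i₀, hPi₀, hci₀⟩ := hmem.2
  have hWlow : ENNReal.ofReal ((2:ℝ) ^ vmax) ≤ W := by
    calc ENNReal.ofReal ((2:ℝ) ^ vmax) ≤ ENNReal.ofReal (q i₀ - p i₀) :=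
          ENNReal.ofReal_le_ofReal (by rw [hvmax, ← hci₀]; exact (hc i₀).1)
      _ = volume (Set.Icc (p i₀) (q i₀)) := (Real.volume_Icc).symm
      _ ≤ W := measure_mono (Set.subset_biUnion_of_mem (u := fun i => Set.Icc (p i) (q i)) hPi₀)
  set θ : ℤ := vmax - (m + 2) with hθ
  have hb1 : ∑ v ∈ occ.filter (fun v => θ < v), f v ≤ ((m + 2 : ℕ) : ℝ≥0∞) * W := by
    have hcard : (occ.filter (fun v => θ < v)).card ≤ m + 2 := by
      have hsub : occ.filter (fun v => θ < v) ⊆ Finset.Icc (θ + 1) vmax := by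
        intro v hv
        rcases Finset.mem_filter.mp hv with ⟨hv1, hv2⟩
        exact Finset.mem_Icc.mpr ⟨by omega, occ.le_max' v hv1⟩
      calc (occ.filter (fun v => θ < v)).card ≤ (Finset.Icc (θ + 1) vmax).card :=
            Finset.card_le_card hsub
        _ = m + 2 := by rw [Int.card_Icc]; omega
    calc ∑ v ∈ occ.filter (fun v => θ < v), f v
        ≤ (occ.filter (fun v => θ < v)).card • W :=
          Finset.sum_le_card_nsmul _ _ _ (fun v _ => hfW v)
      _ = ((occ.filter (fun v => θ < v)).card : ℝ≥0∞) * W := nsmul_eq_mul _ _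
      _ ≤ _ := mul_le_mul' (Nat.cast_le.mpr hcard) le_rfl
  have hb2 : ∑ v ∈ occ.filter (fun v => ¬ θ < v), f v ≤ W := by
    have hle : ∀ v ∈ occ.filter (fun v => ¬ θ < v), v ≤ θ :=
      fun v hv => by have := (Finset.mem_filter.mp hv).2; omega
    have hreal : ∑ v ∈ occ.filter (fun v => ¬ θ < v), (n : ℝ) * 2 ^ (v + 1) ≤ (2:ℝ) ^ vmax := by
      have h1 : ∑ v ∈ occ.filter (fun v => ¬ θ < v), (n : ℝ) * 2 ^ (v + 1)
          = (n : ℝ) * 2 * ∑ v ∈ occ.filter (fun v => ¬ θ < v), (2:ℝ) ^ v := by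
        rw [Finset.mul_sum]
        refine Finset.sum_congr rfl ?_
        intro v hv
        rw [zpow_add₀ (by norm_num : (2:ℝ) ≠ 0), zpow_one]
        ring
      rw [h1]
      have h2 := geo_sum_le θ _ hle
      have hn' : (n : ℝ) ≤ 2 ^ (m : ℤ) := by
        rw [zpow_natCast]
        exact_mod_cast hn
      have hgeo_nonneg : (0:ℝ) ≤ ∑ v ∈ occ.filter (fun v => ¬ θ < v), (2:ℝ) ^ v :=
        Finset.sum_nonneg fun v _ => by positivity
      calc (n : ℝ) * 2 * ∑ v ∈ occ.filter (fun v => ¬ θ < v), (2:ℝ) ^ v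
          ≤ (2:ℝ) ^ (m : ℤ) * 2 * (2 ^ (θ + 1)) := by
            apply mul_le_mul
            · apply mul_le_mul_of_nonneg_right hn' (by norm_num)
            · exact h2
            · exact hgeo_nonneg
            · positivity
        _ = (2:ℝ) ^ ((m : ℤ) + 1 + (θ + 1)) := by
            rw [zpow_add₀ (two_ne_zero) ((m:ℤ)+1) (θ+1), zpow_add₀ (two_ne_zero) (m:ℤ) 1,
              zpow_one]
        _ = (2:ℝ) ^ vmax := by congr 1; omega
    calc ∑ v ∈ occ.filter (fun v => ¬ θ < v), f v
        ≤ ∑ v ∈ occ.filter (fun v => ¬ θ < v), ENNReal.ofReal ((n : ℝ) * 2 ^ (v + 1)) :=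
          Finset.sum_le_sum (fun v _ => hfub v)
      _ = ENNReal.ofReal (∑ v ∈ occ.filter (fun v => ¬ θ < v), (n : ℝ) * 2 ^ (v + 1)) :=
          (ENNReal.ofReal_sum_of_nonneg (fun v _ => by positivity)).symm
      _ ≤ ENNReal.ofReal ((2:ℝ) ^ vmax) := ENNReal.ofReal_le_ofReal hreal
      _ ≤ W := hWlow
  calc ∑ v ∈ occ, f v
      = ∑ v ∈ occ.filter (fun v => θ < v), f v + ∑ v ∈ occ.filter (fun v => ¬ θ < v), f v :=
        (Finset.sum_filter_add_sum_filter_not _ _ _).symm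
    _ ≤ ((m + 2 : ℕ) : ℝ≥0∞) * W + W := add_le_add hb1 hb2
    _ = ((m + 3 : ℕ) : ℝ≥0∞) * W := by push_cast; ring
    _ ≤ ((8 * m : ℕ) : ℝ≥0∞) * W := mul_le_mul' (Nat.cast_le.mpr (by omega)) le_rfl

lemma oneCoord {d' n : ℕ} (m : ℕ) (hm : 1 ≤ m) (hn : n ≤ 2 ^ m)
    (a b : Fin n → Fin (d'+1) → ℝ)
    (c : Fin n → Fin (d'+1) → ℤ)
    (hc : ∀ i k, (2:ℝ) ^ (c i k) ≤ b i k - a i k ∧ b i k - a i k < 2 ^ (c i k + 1))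
    (k₀ : Fin (d'+1)) (P : Fin n → Prop) (C : Finset ℤ) :
    ∑ v ∈ C, volume (⋃ i ∈ {i : Fin n | P i ∧ c i k₀ = v},
        Set.univ.pi fun k => Set.Icc (a i k) (b i k))
      ≤ ((8 * m : ℕ) : ℝ≥0∞) * volume (⋃ i ∈ {i : Fin n | P i},
        Set.univ.pi fun k => Set.Icc (a i k) (b i k)) := by
  classical
  set e := MeasurableEquiv.piFinSuccAbove (fun _ : Fin (d'+1) => ℝ) k₀ with he
  have hmp := MeasureTheory.volume_preserving_piFinSuccAbove (fun _ : Fin (d'+1) => ℝ) k₀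
  set B' : Fin n → Set (Fin d' → ℝ) :=
    fun i => Set.univ.pi fun j => Set.Icc (a i (k₀.succAbove j)) (b i (k₀.succAbove j)) with hB'
  have hB'meas : ∀ i, MeasurableSet (B' i) :=
    fun i => MeasurableSet.univ_pi fun j => measurableSet_Icc
  -- the product-space picture of a union of boxes
  have key : ∀ Q : Fin n → Prop,
      ∃ S : Set (ℝ × (Fin d' → ℝ)), MeasurableSet S ∧
        (∀ y, (fun t => (t, y)) ⁻¹' S
            = ⋃ i ∈ {i : Fin n | Q i ∧ y ∈ B' i}, Set.Icc (a i k₀) (b i k₀)) ∧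
        volume (⋃ i ∈ {i : Fin n | Q i}, Set.univ.pi fun k => Set.Icc (a i k) (b i k))
            = ∫⁻ y, volume ((fun t => (t, y)) ⁻¹' S) := by
    intro Q
    refine ⟨⋃ i ∈ {i : Fin n | Q i}, (Set.Icc (a i k₀) (b i k₀)) ×ˢ B' i, ?_, ?_, ?_⟩
    · exact MeasurableSet.biUnion (Set.to_countable _)
        (fun i _ => (measurableSet_Icc).prod (hB'meas i))
    · intro y
      ext t
      simp only [Set.mem_preimage, Set.mem_iUnion, Set.mem_setOf_eq, Set.mem_prod]
      constructor
      · rintro ⟨i, hQ, ht, hy⟩; exact ⟨i, ⟨hQ, hy⟩, ht⟩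
      · rintro ⟨i, ⟨hQ, hy⟩, ht⟩; exact ⟨i, hQ, ht, hy⟩
    · have hpre : e ⁻¹' (⋃ i ∈ {i : Fin n | Q i}, (Set.Icc (a i k₀) (b i k₀)) ×ˢ B' i)
          = ⋃ i ∈ {i : Fin n | Q i}, Set.univ.pi fun k => Set.Icc (a i k) (b i k) := by
        ext x
        simp only [Set.mem_preimage, Set.mem_iUnion, Set.mem_prod, Set.mem_pi, Set.mem_univ,
          true_implies, he, MeasurableEquiv.piFinSuccAbove_apply, Fin.insertNthEquiv_symm_apply,
          Fin.removeNth]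
        refine exists_congr fun i => exists_congr fun _ => ?_
        rw [Fin.forall_iff_succAbove k₀]
        simp [hB', Fin.removeNth, Pi.le_def, Set.mem_pi, forall_and]
      rw [← hpre, hmp.measure_preimage
        (MeasurableSet.biUnion (Set.to_countable _)
          (fun i _ => (measurableSet_Icc).prod (hB'meas i))).nullMeasurableSet]
      rw [Measure.volume_eq_prod, Measure.prod_apply_symm
        (MeasurableSet.biUnion (Set.to_countable _)
          (fun i _ => (measurableSet_Icc).prod (hB'meas i)))]
  -- apply to each class and to the total union
  have hSv : ∀ v : ℤ, ∃ S : Set (ℝ × (Fin d' → ℝ)), MeasurableSet S ∧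
      (∀ y, (fun t => (t, y)) ⁻¹' S
          = ⋃ i ∈ {i : Fin n | (P i ∧ y ∈ B' i) ∧ c i k₀ = v}, Set.Icc (a i k₀) (b i k₀)) ∧
      volume (⋃ i ∈ {i : Fin n | P i ∧ c i k₀ = v}, Set.univ.pi fun k => Set.Icc (a i k) (b i k))
          = ∫⁻ y, volume ((fun t => (t, y)) ⁻¹' S) := by
    intro v
    obtain ⟨S, hS1, hS2, hS3⟩ := key (fun i => P i ∧ c i k₀ = v)
    refine ⟨S, hS1, fun y => ?_, hS3⟩
    rw [hS2 y]
    ext t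
    simp only [Set.mem_iUnion, Set.mem_setOf_eq, exists_prop]
    tauto
  choose Sv hSv1 hSv2 hSv3 using hSv
  obtain ⟨S, hS1, hS2, hS3⟩ := key P
  calc ∑ v ∈ C, volume (⋃ i ∈ {i : Fin n | P i ∧ c i k₀ = v},
          Set.univ.pi fun k => Set.Icc (a i k) (b i k))
      = ∑ v ∈ C, ∫⁻ y, volume ((fun t => (t, y)) ⁻¹' Sv v) := by
        exact Finset.sum_congr rfl fun v _ => hSv3 v
    _ = ∫⁻ y, ∑ v ∈ C, volume ((fun t => (t, y)) ⁻¹' Sv v) :=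
        (lintegral_finset_sum _ (fun v _ => measurable_measure_prodMk_right (hSv1 v))).symm
    _ ≤ ∫⁻ y, ((8 * m : ℕ) : ℝ≥0∞) * volume ((fun t => (t, y)) ⁻¹' S) := by
        refine lintegral_mono fun y => ?_
        have h1d := oneD m hm hn (fun i => a i k₀) (fun i => b i k₀) (fun i => c i k₀)
          (fun i => hc i k₀) (fun i => P i ∧ y ∈ B' i) C
        calc ∑ v ∈ C, volume ((fun t => (t, y)) ⁻¹' Sv v)
            = ∑ v ∈ C, volume (⋃ i ∈ {i : Fin n | (P i ∧ y ∈ B' i) ∧ c i k₀ = v},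
                Set.Icc (a i k₀) (b i k₀)) := Finset.sum_congr rfl fun v _ => by rw [hSv2 v y]
          _ ≤ ((8 * m : ℕ) : ℝ≥0∞) * volume (⋃ i ∈ {i : Fin n | P i ∧ y ∈ B' i},
                Set.Icc (a i k₀) (b i k₀)) := h1d
          _ = ((8 * m : ℕ) : ℝ≥0∞) * volume ((fun t => (t, y)) ⁻¹' S) := by rw [hS2 y]
    _ = ((8 * m : ℕ) : ℝ≥0∞) * ∫⁻ y, volume ((fun t => (t, y)) ⁻¹' S) :=
        lintegral_const_mul _ (measurable_measure_prodMk_right hS1)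
    _ = ((8 * m : ℕ) : ℝ≥0∞) * volume (⋃ i ∈ {i : Fin n | P i},
          Set.univ.pi fun k => Set.Icc (a i k) (b i k)) := by rw [hS3]


lemma oneCoordGen {d n : ℕ} (m : ℕ) (hm : 1 ≤ m) (hn : n ≤ 2 ^ m)
    (a b : Fin n → Fin d → ℝ) (c : Fin n → Fin d → ℤ)
    (hc : ∀ i k, (2:ℝ) ^ (c i k) ≤ b i k - a i k ∧ b i k - a i k < 2 ^ (c i k + 1))
    (k₀ : Fin d) (P : Fin n → Prop) (C : Finset ℤ) :
    ∑ v ∈ C, volume (⋃ i ∈ {i : Fin n | P i ∧ c i k₀ = v},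
        Set.univ.pi fun k => Set.Icc (a i k) (b i k))
      ≤ ((8 * m : ℕ) : ℝ≥0∞) * volume (⋃ i ∈ {i : Fin n | P i},
        Set.univ.pi fun k => Set.Icc (a i k) (b i k)) :=
  match d, a, b, c, k₀, hc with
  | 0, _, _, _, k₀, _ => k₀.elim0
  | _+1, a, b, c, k₀, hc => oneCoord m hm hn a b c hc k₀ P C

/-- Classes do not overlap much: for `n ≥ 2` boxes with positive side lengths,
partitioned into classes by type, the sum over all occurring types `L` of the
volume of the union `U_L` of the boxes of type `L` is at most
`2 * (8 * ⌈log₂ n⌉) ^ d * V`, where `V` is the volume of the union of all boxes.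
(Types that do not occur contribute an empty union, hence volume `0`.) -/
theorem sum_class_volumes_le (d n : ℕ) (hn : 2 ≤ n)
    (a b : Fin n → Fin d → ℝ) (hab : ∀ i k, a i k < b i k) :
    ∑' L : Fin d → ℤ,
        volume (⋃ i ∈ {i : Fin n | ∀ k,
            b i k - a i k ∈ Set.Ico ((2 : ℝ) ^ (L k)) ((2 : ℝ) ^ (L k + 1))},
          Set.univ.pi fun k => Set.Icc (a i k) (b i k))
      ≤ 2 * ((8 * Nat.clog 2 n : ℕ) : ℝ≥0∞) ^ d *
          volume (⋃ i : Fin n, Set.univ.pi fun k => Set.Icc (a i k) (b i k)) := by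
  classical
  set m := Nat.clog 2 n with hmdef
  have hm : 1 ≤ m := Nat.clog_pos one_lt_two hn
  have hnm : n ≤ 2 ^ m := Nat.le_pow_clog one_lt_two n
  have hpos : ∀ i k, (0:ℝ) < b i k - a i k := fun i k => sub_pos.mpr (hab i k)
  set c : Fin n → Fin d → ℤ := fun i k => Int.log 2 (b i k - a i k) with hcdef
  have hc : ∀ i k, (2:ℝ) ^ (c i k) ≤ b i k - a i k ∧ b i k - a i k < 2 ^ (c i k + 1) := by
    intro i k
    constructor
    · have h := Int.zpow_log_le_self (b := 2) one_lt_two (hpos i k)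
      have h2 : ((2:ℕ):ℝ) = (2:ℝ) := by norm_num
      rw [h2] at h
      exact h
    · have h := Int.lt_zpow_succ_log_self (b := 2) one_lt_two (b i k - a i k)
      have h2 : ((2:ℕ):ℝ) = (2:ℝ) := by norm_num
      rw [h2] at h
      exact h
  have hiff : ∀ (i : Fin n) (L : Fin d → ℤ),
      (∀ k, b i k - a i k ∈ Set.Ico ((2:ℝ) ^ (L k)) ((2:ℝ) ^ (L k + 1))) ↔ c i = L := by
    intro i L
    constructor
    · intro h
      funext k
      rcases h k with ⟨h1, h2⟩
      have hle : L k ≤ c i k := by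
        have h1' : ((2:ℕ):ℝ) ^ (L k) ≤ b i k - a i k := by push_cast; exact h1
        exact (Int.zpow_le_iff_le_log one_lt_two (hpos i k)).mp h1'
      have hge : c i k ≤ L k := by
        by_contra hcon
        push_neg at hcon
        have h3 : (2:ℝ) ^ (L k + 1) ≤ 2 ^ (c i k) :=
          zpow_le_zpow_right₀ one_le_two (by omega)
        have h4 := (hc i k).1
        linarith
      omega
    · intro h k
      have h1 := (hc i k).1
      have h2 := (hc i k).2
      rw [h] at h1 h2
      exact ⟨h1, h2⟩
  set Box : Fin n → Set (Fin d → ℝ) :=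
    fun i => Set.univ.pi fun k => Set.Icc (a i k) (b i k) with hBox
  set trunc : ℕ → Fin n → Fin d → ℤ := fun j i k => if (k:ℕ) < j then c i k else 0 with htr
  set V := volume (⋃ i : Fin n, Box i) with hV
  have main : ∀ j : ℕ, j ≤ d →
      ∑ t ∈ Finset.image (trunc j) Finset.univ,
        volume (⋃ i ∈ {i : Fin n | trunc j i = t}, Box i)
      ≤ ((8 * m : ℕ) : ℝ≥0∞) ^ j * V := by
    intro j hjd
    induction j with
    | zero =>
      have hne : (Finset.univ : Finset (Fin n)).Nonempty := ⟨⟨0, by omega⟩, Finset.mem_univ _⟩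
      have h0 : trunc 0 = fun _ (_ : Fin d) => (0:ℤ) := by
        funext i k; simp [htr]
      rw [h0, Finset.image_const hne, Finset.sum_singleton]
      have hset : {i : Fin n | (fun _ (_ : Fin d) => (0:ℤ)) i = fun _ => 0} = Set.univ := by
        ext i; simp
      rw [hset, pow_zero, one_mul, hV]
      rw [Set.biUnion_univ]
    | succ j ih =>
      have hj : j ≤ d := by omega
      have hjd' : j < d := by omega
      set k₀ : Fin d := ⟨j, hjd'⟩ with hk₀
      set ρ : (Fin d → ℤ) → (Fin d → ℤ) := fun t k => if (k:ℕ) < j then t k else 0 with hρ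
      have hρtr : ∀ i, ρ (trunc (j+1) i) = trunc j i := by
        intro i; funext k
        by_cases h : (k:ℕ) < j
        · simp [hρ, htr, h, show (k:ℕ) < j+1 by omega]; intro h'; omega
        · simp [hρ, htr, h]
      have hmaps : ∀ t' ∈ Finset.image (trunc (j+1)) Finset.univ,
          ρ t' ∈ Finset.image (trunc j) Finset.univ := by
        intro t' ht'
        rcases Finset.mem_image.mp ht' with ⟨i, _, rfl⟩
        rw [hρtr i]
        exact Finset.mem_image_of_mem _ (Finset.mem_univ i)
      rw [← Finset.sum_fiberwise_of_maps_to hmaps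
        (fun t' => volume (⋃ i ∈ {i : Fin n | trunc (j+1) i = t'}, Box i))]
      have hinner : ∀ t ∈ Finset.image (trunc j) Finset.univ,
          ∑ t' ∈ (Finset.image (trunc (j+1)) Finset.univ).filter (fun t' => ρ t' = t),
            volume (⋃ i ∈ {i : Fin n | trunc (j+1) i = t'}, Box i)
          ≤ ((8 * m : ℕ) : ℝ≥0∞) * volume (⋃ i ∈ {i : Fin n | trunc j i = t}, Box i) := by
        intro t ht
        rcases Finset.mem_image.mp ht with ⟨i₀, _, hti₀⟩
        have htzero : ∀ k : Fin d, ¬ ((k:ℕ) < j) → t k = 0 := by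
          intro k hk; rw [← hti₀]; simp [htr, hk]
        set upd : ℤ → (Fin d → ℤ) := fun v k =>
          if (k:ℕ) < j then t k else if (k:ℕ) = j then v else 0 with hupd
        have hrepr : ∀ t' ∈ (Finset.image (trunc (j+1)) Finset.univ).filter (fun t' => ρ t' = t),
            t' = upd (t' k₀) := by
          intro t' ht'
          rcases Finset.mem_filter.mp ht' with ⟨ht'1, ht'2⟩
          rcases Finset.mem_image.mp ht'1 with ⟨i, _, rfl⟩
          funext k
          by_cases h1 : (k:ℕ) < j
          · have := congrFun ht'2 k
            simp only [hρ, if_pos h1] at this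
            simp [hupd, h1, this]
          · by_cases h2 : (k:ℕ) = j
            · have hkk : k = k₀ := Fin.ext h2
              simp [hupd, h1, h2, hkk, hk₀]
            · simp [hupd, htr, h1, h2, show ¬ ((k:ℕ) < j+1) by omega]
        have hclass : ∀ v : ℤ,
            {i : Fin n | trunc (j+1) i = upd v} = {i : Fin n | trunc j i = t ∧ c i k₀ = v} := by
          intro v
          ext i
          simp only [Set.mem_setOf_eq]
          constructor
          · intro h
            constructor
            · funext k
              by_cases h1 : (k:ℕ) < j
              · have := congrFun h k
                simp only [htr, if_pos (show (k:ℕ) < j+1 by omega)] at this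
                simp only [htr, if_pos h1]
                rw [this, hupd]
                simp [h1]
              · simp only [htr, if_neg h1]
                exact (htzero k h1).symm
            · have := congrFun h k₀
              simp only [htr, hk₀] at this
              simpa [hupd, show ¬ (j < j) by omega] using this
          · rintro ⟨h1, h2⟩
            funext k
            by_cases hk1 : (k:ℕ) < j
            · have := congrFun h1 k
              simp only [htr, if_pos hk1] at this
              simp only [htr, if_pos (show (k:ℕ) < j+1 by omega), hupd, if_pos hk1]
              exact this
            · by_cases hk2 : (k:ℕ) = j
              · have hkk : k = k₀ := Fin.ext hk2
                simp only [htr, if_pos (show (k:ℕ) < j+1 by omega), hupd, if_neg hk1, if_pos hk2]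
                rw [hkk]; exact h2
              · simp [htr, hupd, hk1, hk2, show ¬ ((k:ℕ) < j+1) by omega]
        have hinj : ∀ x ∈ (Finset.image (trunc (j+1)) Finset.univ).filter (fun t' => ρ t' = t),
            ∀ y ∈ (Finset.image (trunc (j+1)) Finset.univ).filter (fun t' => ρ t' = t),
            x k₀ = y k₀ → x = y := by
          intro x hx y hy hxy
          rw [hrepr x hx, hrepr y hy, hxy]
        calc ∑ t' ∈ (Finset.image (trunc (j+1)) Finset.univ).filter (fun t' => ρ t' = t),
              volume (⋃ i ∈ {i : Fin n | trunc (j+1) i = t'}, Box i)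
            = ∑ v ∈ ((Finset.image (trunc (j+1)) Finset.univ).filter
                  (fun t' => ρ t' = t)).image (fun t' => t' k₀),
                volume (⋃ i ∈ {i : Fin n | trunc j i = t ∧ c i k₀ = v}, Box i) := by
              rw [Finset.sum_image hinj]
              refine Finset.sum_congr rfl ?_
              intro t' ht'
              rw [← hclass (t' k₀), ← hrepr t' ht']
          _ ≤ ((8 * m : ℕ) : ℝ≥0∞) * volume (⋃ i ∈ {i : Fin n | trunc j i = t}, Box i) :=
              oneCoordGen m hm hnm a b c hc k₀ (fun i => trunc j i = t) _
      calc ∑ t ∈ Finset.image (trunc j) Finset.univ,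
            ∑ t' ∈ (Finset.image (trunc (j+1)) Finset.univ).filter (fun t' => ρ t' = t),
              volume (⋃ i ∈ {i : Fin n | trunc (j+1) i = t'}, Box i)
          ≤ ∑ t ∈ Finset.image (trunc j) Finset.univ,
              ((8 * m : ℕ) : ℝ≥0∞) * volume (⋃ i ∈ {i : Fin n | trunc j i = t}, Box i) :=
            Finset.sum_le_sum hinner
        _ = ((8 * m : ℕ) : ℝ≥0∞) * ∑ t ∈ Finset.image (trunc j) Finset.univ,
              volume (⋃ i ∈ {i : Fin n | trunc j i = t}, Box i) := by
            rw [Finset.mul_sum]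
        _ ≤ ((8 * m : ℕ) : ℝ≥0∞) * (((8 * m : ℕ) : ℝ≥0∞) ^ j * V) :=
            mul_le_mul' le_rfl (ih hj)
        _ = ((8 * m : ℕ) : ℝ≥0∞) ^ (j+1) * V := by ring
  -- convert the tsum
  have htrd : trunc d = c := by
    funext i k; simp [htr, k.isLt]
  have hsets : ∀ L : Fin d → ℤ,
      {i : Fin n | ∀ k, b i k - a i k ∈ Set.Ico ((2:ℝ) ^ (L k)) ((2:ℝ) ^ (L k + 1))}
        = {i : Fin n | trunc d i = L} := by
    intro L; ext i
    simp only [Set.mem_setOf_eq, htrd]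
    exact hiff i L
  have htsum : ∑' L : Fin d → ℤ,
      volume (⋃ i ∈ {i : Fin n | ∀ k,
          b i k - a i k ∈ Set.Ico ((2:ℝ) ^ (L k)) ((2:ℝ) ^ (L k + 1))}, Box i)
      = ∑ t ∈ Finset.image (trunc d) Finset.univ,
          volume (⋃ i ∈ {i : Fin n | trunc d i = t}, Box i) := by
    have hzero : ∀ L : (Fin d → ℤ), L ∉ Finset.image (trunc d) Finset.univ →
        volume (⋃ i ∈ {i : Fin n | ∀ k,
          b i k - a i k ∈ Set.Ico ((2:ℝ) ^ (L k)) ((2:ℝ) ^ (L k + 1))}, Box i) = 0 := by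
      intro L hL
      have : {i : Fin n | trunc d i = L} = ∅ := by
        ext i
        simp only [Set.mem_setOf_eq, Set.mem_empty_iff_false, iff_false]
        intro h
        exact hL (by rw [← h]; exact Finset.mem_image_of_mem _ (Finset.mem_univ i))
      rw [hsets L, this]
      simp
    rw [tsum_eq_sum hzero]
    exact Finset.sum_congr rfl fun L _ => by rw [hsets L]
  rw [htsum]
  calc ∑ t ∈ Finset.image (trunc d) Finset.univ,
        volume (⋃ i ∈ {i : Fin n | trunc d i = t}, Box i)
      ≤ ((8 * m : ℕ) : ℝ≥0∞) ^ d * V := main d le_rfl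
    _ ≤ 2 * (((8 * m : ℕ) : ℝ≥0∞) ^ d * V) :=
        le_mul_of_one_le_left zero_le one_le_two
    _ = 2 * ((8 * m : ℕ) : ℝ≥0∞) ^ d * V := by ring
end

section
/- Let (L_1,…,L_d) ∈ ℤ^d and let C be a finite nonempty family of axis-aligned boxes in ℝ^d, each of type (L_1,…,L_d). Let U_t be the union of the boxes in C, and let U be the union of all grid cells ∏_{k=1}^d [i_k·2^{L_k}, (i_k+1)·2^{L_k}) that have nonempty intersection with U_t. Then Vol(U) ≤ 3^d · Vol(U_t). -/
open MeasureTheory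
open scoped ENNReal

namespace VolumeGridCover

lemma floor_eq_of_mem {l x : ℝ} (hl : 0 < l) {m : ℤ}
    (h : x ∈ Set.Ico ((m : ℝ) * l) (((m : ℝ) + 1) * l)) : ⌊x / l⌋ = m := by
  obtain ⟨h1, h2⟩ := h
  rw [Int.floor_eq_iff]
  constructor
  · rwa [le_div_iff₀ hl]
  · rw [div_lt_iff₀ hl]; push_cast; linarith

lemma mem_cell_floor {l : ℝ} (hl : 0 < l) (x : ℝ) :
    x ∈ Set.Ico ((⌊x / l⌋ : ℝ) * l) (((⌊x / l⌋ : ℝ) + 1) * l) := by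
  constructor
  · calc (⌊x / l⌋ : ℝ) * l ≤ (x / l) * l :=
        mul_le_mul_of_nonneg_right (Int.floor_le _) hl.le
      _ = x := div_mul_cancel₀ x hl.ne'
  · calc x = (x / l) * l := (div_mul_cancel₀ x hl.ne').symm
      _ < ((⌊x / l⌋ : ℝ) + 1) * l :=
        mul_lt_mul_of_pos_right (Int.lt_floor_add_one _) hl

variable (d : ℕ) (L : Fin d → ℤ)

/-- The grid cell with index `c`. -/
def cell (c : Fin d → ℤ) : Set (Fin d → ℝ) :=
  Set.univ.pi fun k => Set.Ico ((c k : ℝ) * 2 ^ (L k)) (((c k : ℝ) + 1) * 2 ^ (L k))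

lemma lpos (k : Fin d) : (0:ℝ) < 2 ^ (L k) := zpow_pos (by norm_num) _

lemma cell_measurable (c : Fin d → ℤ) : MeasurableSet (cell d L c) :=
  MeasurableSet.univ_pi fun _ => measurableSet_Ico

lemma cell_volume (c : Fin d → ℤ) :
    volume (cell d L c) = ∏ k, ENNReal.ofReal ((2:ℝ) ^ (L k)) := by
  rw [cell, volume_pi_pi]
  refine Finset.prod_congr rfl fun k _ => ?_
  rw [Real.volume_Ico]
  congr 1
  ring

lemma cell_pairwise_disjoint : Pairwise (Function.onFun Disjoint (cell d L)) := by
  intro c c' hne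
  obtain ⟨k, hk⟩ := Function.ne_iff.mp hne
  refine Set.disjoint_left.mpr fun x hx hx' => ?_
  have h1 := floor_eq_of_mem (lpos d L k) (hx k trivial)
  have h2 := floor_eq_of_mem (lpos d L k) (hx' k trivial)
  exact hk (h1 ▸ h2)

lemma mem_cell_self (x : Fin d → ℝ) :
    x ∈ cell d L (fun k => ⌊x k / 2 ^ (L k)⌋) := by
  intro k _
  exact mem_cell_floor (lpos d L k) (x k)

lemma tsum_cell_inter {A : Set (Fin d → ℝ)} (hA : MeasurableSet A) :
    ∑' c : Fin d → ℤ, volume (A ∩ cell d L c) = volume A := by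
  rw [← measure_iUnion (fun c c' h => ((cell_pairwise_disjoint d L) h).mono
      Set.inter_subset_right Set.inter_subset_right)
      (fun c => hA.inter (cell_measurable d L c))]
  congr 1
  apply Set.Subset.antisymm
  · exact Set.iUnion_subset fun c => Set.inter_subset_left
  · intro x hx
    exact Set.mem_iUnion.mpr ⟨_, hx, mem_cell_self d L x⟩

lemma card_Icc_pm : (Finset.Icc (-1 : Fin d → ℤ) 1).card = 3 ^ d := by
  rw [Pi.card_Icc]
  have : ∀ k : Fin d, (Finset.Icc ((-1 : Fin d → ℤ) k) ((1 : Fin d → ℤ) k)).card = 3 := by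
    intro k
    rw [Pi.one_apply, Pi.neg_apply, Pi.one_apply, Int.card_Icc]
    rfl
  simp [this]

/-- Main counting lemma. -/
lemma main_aux (Ut : Set (Fin d → ℝ)) (hUt : MeasurableSet Ut)
    (S : Set (Fin d → ℤ))
    (hS : ∀ c ∈ S, ∏ k, ENNReal.ofReal ((2:ℝ) ^ (L k)) ≤
      ∑ c' ∈ Finset.Icc (c - 1) (c + 1), volume (Ut ∩ cell d L c')) :
    volume (⋃ c ∈ S, cell d L c) ≤ 3 ^ d * volume Ut := by
  have g : (Fin d → ℤ) → ℝ≥0∞ := fun c' => volume (Ut ∩ cell d L c')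
  calc volume (⋃ c ∈ S, cell d L c)
      = ∑' c : S, volume (cell d L c) := by
        exact measure_biUnion (Set.to_countable S)
          ((cell_pairwise_disjoint d L).set_pairwise S)
          (fun c _ => cell_measurable d L c)
    _ ≤ ∑' c : S, ∑ c' ∈ Finset.Icc ((c : Fin d → ℤ) - 1) ((c : Fin d → ℤ) + 1),
          volume (Ut ∩ cell d L c') := by
        refine ENNReal.tsum_le_tsum fun c => ?_
        rw [cell_volume]
        exact hS c c.2
    _ ≤ ∑' c : Fin d → ℤ, ∑ c' ∈ Finset.Icc (c - 1) (c + 1), volume (Ut ∩ cell d L c') := by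
        have hsub : ∀ f : (Fin d → ℤ) → ℝ≥0∞, ∑' c : S, f c ≤ ∑' c, f c := by
          intro f
          rw [tsum_subtype]
          exact ENNReal.tsum_le_tsum fun c => Set.indicator_le_self _ _ c
        exact hsub fun c => ∑ c' ∈ Finset.Icc (c - 1) (c + 1), volume (Ut ∩ cell d L c')
    _ = ∑' c : Fin d → ℤ, ∑ e ∈ Finset.Icc (-1 : Fin d → ℤ) 1,
          volume (Ut ∩ cell d L (c + e)) := by
        refine tsum_congr fun c => ?_
        rw [show c - 1 = c + (-1) from sub_eq_add_neg c 1, show c + 1 = c + 1 from rfl,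
          ← Finset.map_add_left_Icc, Finset.sum_map]
        exact Finset.sum_congr rfl fun e _ => by rw [addLeftEmbedding_apply]
    _ = ∑ e ∈ Finset.Icc (-1 : Fin d → ℤ) 1,
          ∑' c : Fin d → ℤ, volume (Ut ∩ cell d L (c + e)) :=
        Summable.tsum_finsetSum fun i _ => ENNReal.summable
    _ = ∑ e ∈ Finset.Icc (-1 : Fin d → ℤ) 1, volume Ut := by
        refine Finset.sum_congr rfl fun e _ => ?_
        rw [show (fun c : Fin d → ℤ => volume (Ut ∩ cell d L (c + e))) =
            (fun c : Fin d → ℤ => volume (Ut ∩ cell d L ((Equiv.addRight e) c))) from rfl,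
          (Equiv.addRight e).tsum_eq (fun c => volume (Ut ∩ cell d L c))]
        exact tsum_cell_inter d L hUt
    _ = 3 ^ d * volume Ut := by
        rw [Finset.sum_const, card_Icc_pm, nsmul_eq_mul]
        norm_cast

end VolumeGridCover

/-- Let `C` (indexed by a nonempty finite set `s`) be a family of boxes, each of
type `(L_1, …, L_d)`, with union `U_t`. Let `U` be the union of all grid cells
`∏_k [c_k 2^{L_k}, (c_k + 1) 2^{L_k})` that intersect `U_t`.
Then `Vol(U) ≤ 3 ^ d * Vol(U_t)`. -/
theorem volume_grid_cover_le (d : ℕ) {ι : Type*} (L : Fin d → ℤ)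
    (s : Finset ι) (hs : s.Nonempty) (a b : ι → Fin d → ℝ)
    (hab : ∀ i ∈ s, ∀ k,
      b i k - a i k ∈ Set.Ico ((2 : ℝ) ^ (L k)) ((2 : ℝ) ^ (L k + 1))) :
    volume (⋃ c ∈ {c : Fin d → ℤ |
        ((Set.univ.pi fun k => Set.Ico ((c k : ℝ) * 2 ^ (L k)) (((c k : ℝ) + 1) * 2 ^ (L k))) ∩
          ⋃ i ∈ s, Set.univ.pi fun k => Set.Icc (a i k) (b i k)).Nonempty},
        Set.univ.pi fun k => Set.Ico ((c k : ℝ) * 2 ^ (L k)) (((c k : ℝ) + 1) * 2 ^ (L k)))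
      ≤ 3 ^ d * volume (⋃ i ∈ s, Set.univ.pi fun k => Set.Icc (a i k) (b i k)) := by
  classical
  set Ut : Set (Fin d → ℝ) := ⋃ i ∈ s, Set.univ.pi fun k => Set.Icc (a i k) (b i k) with hUtdef
  have hUtmeas : MeasurableSet Ut :=
    Set.Finite.measurableSet_biUnion s.finite_toSet
      (fun i _ => MeasurableSet.univ_pi fun k => measurableSet_Icc)
  have key : ∀ c ∈ {c : Fin d → ℤ | (VolumeGridCover.cell d L c ∩ Ut).Nonempty},
      ∏ k, ENNReal.ofReal ((2:ℝ) ^ (L k)) ≤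
        ∑ c' ∈ Finset.Icc (c - 1) (c + 1), volume (Ut ∩ VolumeGridCover.cell d L c') := by
    intro c hc
    obtain ⟨x, hxc, hxU⟩ := hc
    rw [hUtdef, Set.mem_iUnion₂] at hxU
    obtain ⟨i, hi, hxB⟩ := hxU
    -- the shrunken box pieces
    set u : Fin d → ℝ := fun k => max (a i k) (x k - 2 ^ (L k)) with hu
    set v : Fin d → ℝ := fun k => min (b i k) (x k + 2 ^ (L k)) with hv
    have hax : ∀ k, a i k ≤ x k := fun k => (hxB k trivial).1
    have hxb : ∀ k, x k ≤ b i k := fun k => (hxB k trivial).2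
    have hba : ∀ k, (2:ℝ) ^ (L k) ≤ b i k - a i k := fun k => (hab i hi k).1
    have hxc' : ∀ k, x k ∈ Set.Ico ((c k : ℝ) * 2 ^ (L k)) (((c k : ℝ) + 1) * 2 ^ (L k)) :=
      fun k => hxc k trivial
    have huv : ∀ k, u k + 2 ^ (L k) ≤ v k := by
      intro k
      have h1 := hax k; have h2 := hxb k; have h3 := hba k
      have hlk := VolumeGridCover.lpos d L k
      refine le_min ?_ ?_
      · have : max (a i k) (x k - 2 ^ (L k)) ≤ b i k - 2 ^ (L k) :=
          max_le (by linarith) (by linarith)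
        linarith
      · have : max (a i k) (x k - 2 ^ (L k)) ≤ x k := max_le (hax k) (by linarith)
        linarith
    have hvol : ∏ k, ENNReal.ofReal ((2:ℝ) ^ (L k)) ≤
        volume (Set.univ.pi fun k => Set.Ico (u k) (v k)) := by
      rw [volume_pi_pi]
      simp only [Real.volume_Ico]
      exact Finset.prod_le_prod' fun k _ =>
        ENNReal.ofReal_le_ofReal (by linarith [huv k])
    refine hvol.trans ?_
    have hsub : (Set.univ.pi fun k => Set.Ico (u k) (v k)) ⊆
        ⋃ c' ∈ Finset.Icc (c - 1) (c + 1), (Ut ∩ VolumeGridCover.cell d L c') := by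
      intro y hy
      have hyk : ∀ k, u k ≤ y k ∧ y k < v k := fun k => hy k trivial
      rw [Set.mem_iUnion₂]
      refine ⟨fun k => ⌊y k / 2 ^ (L k)⌋, ?_, ?_, VolumeGridCover.mem_cell_self d L y⟩
      · rw [Finset.mem_Icc]
        refine ⟨fun k => ?_, fun k => ?_⟩ <;>
          simp only [Pi.sub_apply, Pi.add_apply, Pi.one_apply]
        · have hlk := VolumeGridCover.lpos d L k
          have h1 := (hyk k).1
          have h2 := (hxc' k).1
          have h3 : ((c k : ℝ) - 1) * 2 ^ (L k) ≤ y k := by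
            have hxk : ((c k : ℝ) - 1) * 2 ^ (L k) ≤ x k - 2 ^ (L k) := by
              rw [sub_mul, one_mul]; linarith
            calc ((c k : ℝ) - 1) * 2 ^ (L k) ≤ x k - 2 ^ (L k) := hxk
              _ ≤ u k := le_max_right _ _
              _ ≤ y k := h1
          rw [Int.le_floor, le_div_iff₀ hlk]
          push_cast
          linarith
        · have hlk := VolumeGridCover.lpos d L k
          have h1 := (hyk k).2
          have h2 := (hxc' k).2
          have hlt : y k < ((c k : ℝ) + 2) * 2 ^ (L k) := by
            have h3 : v k ≤ x k + 2 ^ (L k) := min_le_right _ _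
            have : ((c k : ℝ) + 2) * 2 ^ (L k) = ((c k : ℝ) + 1) * 2 ^ (L k) + 2 ^ (L k) := by
              ring
            linarith
          have : ⌊y k / 2 ^ (L k)⌋ < c k + 2 := by
            rw [Int.floor_lt, div_lt_iff₀ hlk]
            push_cast; linarith
          omega
      · rw [hUtdef, Set.mem_iUnion₂]
        refine ⟨i, hi, fun k _ => ?_⟩
        have h1 := (hyk k).1
        have h2 := (hyk k).2
        exact ⟨le_trans (le_max_left _ _) h1, le_of_lt (lt_of_lt_of_le h2 (min_le_left _ _))⟩
    calc volume (Set.univ.pi fun k => Set.Ico (u k) (v k))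
        ≤ volume (⋃ c' ∈ Finset.Icc (c - 1) (c + 1), (Ut ∩ VolumeGridCover.cell d L c')) :=
          measure_mono hsub
      _ ≤ ∑ c' ∈ Finset.Icc (c - 1) (c + 1), volume (Ut ∩ VolumeGridCover.cell d L c') :=
          measure_biUnion_finset_le _ _
  exact VolumeGridCover.main_aux d L Ut hUtmeas _ key
end

section
/- Let n, ℓ ≥ 1, let x, y ∈ {−1,+1}^ℓ, and let π_1, …, π_ℓ and τ_1, …, τ_ℓ be permutations of {1,…,n}. Define R := {(a, 0) : a ∈ ℤ, n+1 ≤ a ≤ nℓ+n} ⊂ ℤ², X_i := R ∪ {(jn + π_j(i), x_j) : j ∈ {1,…,ℓ}}, and Y_i := R ∪ {(jn + τ_j(i), y_j) : j ∈ {1,…,ℓ}} for i ∈ {1,…,n}. Then 2·|X_1 ∪ ⋯ ∪ X_n ∪ Y_1 ∪ ⋯ ∪ Y_n| = 5nℓ − n·⟨x,y⟩. -/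
open Finset

lemma biUnion_union_const {α β : Type*} [DecidableEq α] [DecidableEq β] (s : Finset α)
    (hs : s.Nonempty) (A : Finset β) (f : α → Finset β) :
    s.biUnion (fun i => A ∪ f i) = A ∪ s.biUnion f := by
  ext b
  simp only [mem_biUnion, mem_union]
  constructor
  · rintro ⟨i, hi, h | h⟩
    · exact Or.inl h
    · exact Or.inr ⟨i, hi, h⟩
  · rintro (h | ⟨i, hi, h⟩)
    · exact hs.elim fun i hi => ⟨i, hi, Or.inl h⟩
    · exact ⟨i, hi, Or.inr h⟩

lemma biUnion_swap {α β γ : Type*} [Fintype α] [Fintype β] [DecidableEq γ]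
    (g : β → α → γ) :
    (Finset.univ : Finset α).biUnion (fun i => Finset.univ.image (fun j => g j i)) =
      (Finset.univ : Finset β).biUnion (fun j => Finset.univ.image (fun i => g j i)) := by
  classical
  ext c
  simp only [mem_biUnion, mem_image, mem_univ, true_and]
  exact ⟨fun ⟨i, j, h⟩ => ⟨j, i, h⟩, fun ⟨j, i, h⟩ => ⟨i, j, h⟩⟩

lemma image_perm_point (n : ℕ) (σ : Equiv.Perm (Fin n)) (c v : ℤ) :
    Finset.univ.image (fun i : Fin n => (c + (((σ i : ℕ) : ℤ) + 1), v)) =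
      (Finset.Icc (c + 1) (c + n)).image (fun a : ℤ => (a, v)) := by
  ext p
  simp only [mem_image, mem_univ, true_and, mem_Icc]
  constructor
  · rintro ⟨i, rfl⟩
    refine ⟨c + (((σ i : ℕ) : ℤ) + 1), ⟨by omega, ?_⟩, rfl⟩
    have := (σ i).isLt
    omega
  · rintro ⟨a, ⟨h1, h2⟩, rfl⟩
    have hk : (a - c - 1).toNat < n := by omega
    refine ⟨σ.symm ⟨(a - c - 1).toNat, hk⟩, ?_⟩
    have : σ (σ.symm ⟨(a - c - 1).toNat, hk⟩) = ⟨(a - c - 1).toNat, hk⟩ := σ.apply_symm_apply _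
    rw [this]
    simp only [Prod.mk.injEq]
    constructor
    · simp; omega
    · trivial

lemma biUnion_union_distrib {α β : Type*} [DecidableEq α] [DecidableEq β] (s : Finset α)
    (f g : α → Finset β) :
    s.biUnion f ∪ s.biUnion g = s.biUnion (fun a => f a ∪ g a) := by
  ext b
  simp only [mem_union, mem_biUnion]
  constructor
  · rintro (⟨a, ha, h⟩ | ⟨a, ha, h⟩)
    · exact ⟨a, ha, Or.inl h⟩
    · exact ⟨a, ha, Or.inr h⟩
  · rintro ⟨a, ha, h | h⟩
    · exact Or.inl ⟨a, ha, h⟩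
    · exact Or.inr ⟨a, ha, h⟩

/-- With `R = {(a, 0) : n + 1 ≤ a ≤ nℓ + n}`,
`X_i = R ∪ {(jn + π_j(i), x_j) : j ∈ {1, …, ℓ}}` and
`Y_i = R ∪ {(jn + τ_j(i), y_j) : j ∈ {1, …, ℓ}}`, we have
`2 |X_1 ∪ ⋯ ∪ X_n ∪ Y_1 ∪ ⋯ ∪ Y_n| = 5nℓ - n⟨x, y⟩`. Here `j ∈ {1, …, ℓ}` is
represented by `(j : Fin ℓ)` with value `j + 1`, and `π_j(i), τ_j(i) ∈ {1, …, n}`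
by the corresponding `Fin n` values plus one. -/
theorem two_mul_card_union_XY (n ℓ : ℕ) (hn : 1 ≤ n) (hℓ : 1 ≤ ℓ)
    (x y : Fin ℓ → ℤ) (hx : ∀ j, x j = 1 ∨ x j = -1) (hy : ∀ j, y j = 1 ∨ y j = -1)
    (π τ : Fin ℓ → Equiv.Perm (Fin n)) :
    2 * ((Finset.univ.biUnion (fun i : Fin n =>
        Finset.image (fun a : ℤ => (a, (0 : ℤ))) (Finset.Icc ((n : ℤ) + 1) ((n : ℤ) * ℓ + n)) ∪
          Finset.univ.image (fun j : Fin ℓ =>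
            ((((j : ℕ) : ℤ) + 1) * n + (((π j i : ℕ) : ℤ) + 1), x j))) ∪
      Finset.univ.biUnion (fun i : Fin n =>
        Finset.image (fun a : ℤ => (a, (0 : ℤ))) (Finset.Icc ((n : ℤ) + 1) ((n : ℤ) * ℓ + n)) ∪
          Finset.univ.image (fun j : Fin ℓ =>
            ((((j : ℕ) : ℤ) + 1) * n + (((τ j i : ℕ) : ℤ) + 1), y j)))).card : ℤ)
      = 5 * n * ℓ - n * ∑ j, x j * y j := by
  classical
  haveI : Nonempty (Fin n) := ⟨⟨0, hn⟩⟩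
  set R : Finset (ℤ × ℤ) :=
    Finset.image (fun a : ℤ => (a, (0 : ℤ))) (Finset.Icc ((n : ℤ) + 1) ((n : ℤ) * ℓ + n)) with hR
  set c : Fin ℓ → ℤ := fun j => (((j : ℕ) : ℤ) + 1) * n with hc
  set B : Fin ℓ → ℤ → Finset (ℤ × ℤ) :=
    fun j v => (Finset.Icc (c j + 1) (c j + n)).image (fun a : ℤ => (a, v)) with hB
  -- rewrite the big union
  have key : (Finset.univ.biUnion (fun i : Fin n =>
        R ∪ Finset.univ.image (fun j : Fin ℓ =>
            ((((j : ℕ) : ℤ) + 1) * n + (((π j i : ℕ) : ℤ) + 1), x j))) ∪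
      Finset.univ.biUnion (fun i : Fin n =>
        R ∪ Finset.univ.image (fun j : Fin ℓ =>
            ((((j : ℕ) : ℤ) + 1) * n + (((τ j i : ℕ) : ℤ) + 1), y j))))
      = R ∪ Finset.univ.biUnion (fun j : Fin ℓ => B j (x j) ∪ B j (y j)) := by
    rw [biUnion_union_const _ Finset.univ_nonempty, biUnion_union_const _ Finset.univ_nonempty]
    rw [union_union_union_comm, union_self]
    congr 1
    rw [biUnion_swap (fun (j : Fin ℓ) (i : Fin n) =>
          ((((j : ℕ) : ℤ) + 1) * n + (((π j i : ℕ) : ℤ) + 1), x j)),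
        biUnion_swap (fun (j : Fin ℓ) (i : Fin n) =>
          ((((j : ℕ) : ℤ) + 1) * n + (((τ j i : ℕ) : ℤ) + 1), y j))]
    rw [biUnion_union_distrib]
    apply Finset.biUnion_congr rfl
    intro j _
    rw [hB]
    congr 1
    · exact image_perm_point n (π j) (c j) (x j)
    · exact image_perm_point n (τ j) (c j) (y j)
  rw [key]
  set T := Finset.univ.biUnion (fun j : Fin ℓ => B j (x j) ∪ B j (y j)) with hT
  have hmemB : ∀ j v (p : ℤ × ℤ), p ∈ B j v → c j + 1 ≤ p.1 ∧ p.1 ≤ c j + n ∧ p.2 = v := by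
    intro j v p hp
    simp only [hB, Finset.mem_image, Finset.mem_Icc] at hp
    obtain ⟨a, ⟨h1, h2⟩, rfl⟩ := hp
    exact ⟨h1, h2, rfl⟩
  have hdisj : Disjoint R T := by
    rw [Finset.disjoint_left]
    intro p hp hpT
    simp only [hR, Finset.mem_image] at hp
    obtain ⟨a, -, rfl⟩ := hp
    simp only [hT, Finset.mem_biUnion, Finset.mem_union] at hpT
    obtain ⟨j, -, h | h⟩ := hpT
    · have h0 := (hmemB _ _ _ h).2.2
      rcases hx j with h' | h' <;> rw [h'] at h0 <;> exact absurd h0 (by norm_num)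
    · have h0 := (hmemB _ _ _ h).2.2
      rcases hy j with h' | h' <;> rw [h'] at h0 <;> exact absurd h0 (by norm_num)
  have hinj : ∀ v : ℤ, Function.Injective (fun a : ℤ => (a, v)) := by
    intro v a b h
    exact congrArg Prod.fst h
  have hcardR : R.card = n * ℓ := by
    rw [hR, Finset.card_image_of_injective _ (hinj 0), Int.card_Icc]
    have h1 : (n : ℤ) * ℓ + n + 1 - ((n : ℤ) + 1) = ((n * ℓ : ℕ) : ℤ) := by push_cast; ring
    rw [h1, Int.toNat_natCast]
  have hcardB : ∀ j v, (B j v).card = n := by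
    intro j v
    rw [hB]
    simp only
    rw [Finset.card_image_of_injective _ (hinj v), Int.card_Icc]
    have h1 : c j + n + 1 - (c j + 1) = ((n : ℕ) : ℤ) := by push_cast; ring
    rw [h1, Int.toNat_natCast]
  have hcardBlock : ∀ j, (B j (x j) ∪ B j (y j)).card = if x j = y j then n else 2 * n := by
    intro j
    by_cases h : x j = y j
    · rw [if_pos h, h, Finset.union_self, hcardB]
    · rw [if_neg h, Finset.card_union_of_disjoint, hcardB, hcardB]
      · ring
      · rw [Finset.disjoint_left]
        intro p hp hp'
        have h1 := (hmemB _ _ _ hp).2.2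
        have h2 := (hmemB _ _ _ hp').2.2
        exact h (h1 ▸ h2 ▸ rfl)
  have hcsep : ∀ j j' : Fin ℓ, (j : ℕ) < (j' : ℕ) → c j + n ≤ c j' := by
    intro j j' h
    simp only [hc]
    have hh : ((j : ℕ) : ℤ) + 1 ≤ ((j' : ℕ) : ℤ) := by exact_mod_cast h
    have hn0 : (0 : ℤ) ≤ n := by positivity
    nlinarith
  have hpd : ∀ j ∈ (Finset.univ : Finset (Fin ℓ)), ∀ j' ∈ (Finset.univ : Finset (Fin ℓ)),
      j ≠ j' → Disjoint (B j (x j) ∪ B j (y j)) (B j' (x j') ∪ B j' (y j')) := by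
    intro j _ j' _ hjj'
    rw [Finset.disjoint_left]
    intro p hp hp'
    have h1 : c j + 1 ≤ p.1 ∧ p.1 ≤ c j + n := by
      rcases Finset.mem_union.mp hp with h | h
      · exact ⟨(hmemB _ _ _ h).1, (hmemB _ _ _ h).2.1⟩
      · exact ⟨(hmemB _ _ _ h).1, (hmemB _ _ _ h).2.1⟩
    have h2 : c j' + 1 ≤ p.1 ∧ p.1 ≤ c j' + n := by
      rcases Finset.mem_union.mp hp' with h | h
      · exact ⟨(hmemB _ _ _ h).1, (hmemB _ _ _ h).2.1⟩
      · exact ⟨(hmemB _ _ _ h).1, (hmemB _ _ _ h).2.1⟩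
    rcases lt_or_gt_of_ne (fun hv => hjj' (Fin.val_injective hv)) with h | h
    · have := hcsep j j' h; omega
    · have := hcsep j' j h; omega
  have hcardT : T.card = ∑ j, (if x j = y j then n else 2 * n) := by
    rw [hT, Finset.card_biUnion hpd]
    exact Finset.sum_congr rfl fun j _ => hcardBlock j
  rw [Finset.card_union_of_disjoint hdisj, hcardR, hcardT]
  have hterm : ∀ j, 2 * (if x j = y j then (n : ℤ) else 2 * n) = 3 * n - n * (x j * y j) := by
    intro j
    rcases hx j with h1 | h1 <;> rcases hy j with h2 | h2 <;> rw [h1, h2] <;> norm_num <;> ring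
  push_cast [apply_ite (Nat.cast : ℕ → ℤ)]
  rw [mul_add, Finset.mul_sum]
  rw [Finset.sum_congr rfl (fun j _ => hterm j), Finset.sum_sub_distrib, Finset.sum_const,
    Finset.card_univ, ← Finset.mul_sum, Fintype.card_fin]
  push_cast
  ring
end
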